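/- Let G be a simple connected graph on n ≥ 2 vertices with remoteness ρ and distance spectral radius ∂_1. Then ∂_1 - ρ ≥ n - 2, with equality if and only if G is the complete graph K_n. -/

import Mathlib

set_option linter.unusedSectionVars false

open Finset
open Matrix

namespace DistPaper

variable {V : Type*} [Fintype V] [DecidableEq V]

/-- The distance matrix of a graph: the `(u,v)` entry is the graph distance. -/
noncomputable def distMatrix (G : SimpleGraph V) : Matrix V V ℝ :=
  fun u v => (G.dist u v : ℝ)

lemma isHermitian_distMatrix (G : SimpleGraph V) : (distMatrix G).IsHermitian := by
  ext u v
  simp [distMatrix, Matrix.conjTranspose_apply, SimpleGraph.dist_comm]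

/-- The `k`-th largest eigenvalue (1-indexed, so `k = 1` is the largest) of the
distance matrix of `G`; junk value `0` if `k - 1 ≥ |V|`. -/
noncomputable def distEig (G : SimpleGraph V) (k : ℕ) : ℝ :=
  if h : k - 1 < Fintype.card V then
    ((isHermitian_distMatrix G).eigenvalues ∘ (Fintype.equivFin V).symm)
      (Tuple.sort ((isHermitian_distMatrix G).eigenvalues ∘ (Fintype.equivFin V).symm)
        (Fin.rev ⟨k - 1, h⟩))
  else 0

/-- The transmission of a vertex: the sum of the distances to all other vertices. -/
noncomputable def transmission (G : SimpleGraph V) (v : V) : ℕ :=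
  ∑ u, G.dist v u

/-- The remoteness of a graph: the maximum over all vertices of the average
distance from that vertex to the others, `ρ = max_v Tr(v)/(n-1)`. -/
noncomputable def remoteness (G : SimpleGraph V) : ℝ :=
  ((univ.sup (transmission G) : ℕ) : ℝ) / ((Fintype.card V : ℝ) - 1)

/-- `G` is a complete multipartite graph: vertices can be classified so that two
vertices are adjacent iff they lie in different classes. -/
def IsCompleteMultipartite (G : SimpleGraph V) : Prop :=
  ∃ f : V → V, ∀ u v, G.Adj u v ↔ f u ≠ f v

/-- The `k`-th largest eigenvalue (1-indexed) of the Laplacian matrix of `G`;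
junk value `0` if `k - 1 ≥ |V|`. -/
noncomputable def lapEig (G : SimpleGraph V) (k : ℕ) : ℝ := by
  classical
  exact if h : k - 1 < Fintype.card V then
    (((SimpleGraph.posSemidef_lapMatrix ℝ G).1).eigenvalues ∘ (Fintype.equivFin V).symm)
      (Tuple.sort ((((SimpleGraph.posSemidef_lapMatrix ℝ G)).1).eigenvalues ∘ (Fintype.equivFin V).symm)
        (Fin.rev ⟨k - 1, h⟩))
  else 0

/-- The Wiener index: the sum of distances over unordered pairs of vertices. -/
noncomputable def wienerIndex (G : SimpleGraph V) : ℝ :=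
  (∑ u, ∑ v, (G.dist u v : ℝ)) / 2


section AUX
open Matrix

lemma distEig_one_eq (G : SimpleGraph V) (h : 0 < Fintype.card V) :
    ∃ v, distEig G 1 = (isHermitian_distMatrix G).eigenvalues v := by
  rw [distEig, dif_pos (show 1 - 1 < Fintype.card V by omega)]
  exact ⟨_, rfl⟩

lemma le_distEig_one (G : SimpleGraph V) (h : 0 < Fintype.card V) (v : V) :
    (isHermitian_distMatrix G).eigenvalues v ≤ distEig G 1 := by
  have h' : 1 - 1 < Fintype.card V := by omega
  rw [distEig, dif_pos h']
  set g := (isHermitian_distMatrix G).eigenvalues ∘ (Fintype.equivFin V).symm with hg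
  have hmono := Tuple.monotone_sort g
  have hv : (isHermitian_distMatrix G).eigenvalues v
      = (g ∘ Tuple.sort g) ((Tuple.sort g)⁻¹ (Fintype.equivFin V v)) := by
    simp [hg]
  rw [hv]
  exact hmono (by
    rw [Fin.le_def, Fin.val_rev]
    have : (⟨1 - 1, h'⟩ : Fin (Fintype.card V)).val = 0 := rfl
    omega)

lemma rayleigh (G : SimpleGraph V) (h : 0 < Fintype.card V) (x : V → ℝ) :
    x ⬝ᵥ (distMatrix G *ᵥ x) ≤ distEig G 1 * (x ⬝ᵥ x) := by
  set A := distMatrix G with hAdef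
  have hA : A.IsHermitian := isHermitian_distMatrix G
  set μ := distEig G 1 with hμdef
  have hpsd : (μ • (1 : Matrix V V ℝ) - A).PosSemidef := by
    have hU : (hA.eigenvectorUnitary : Matrix V V ℝ)
        * star (hA.eigenvectorUnitary : Matrix V V ℝ) = 1 :=
      Matrix.mem_unitaryGroup_iff.mp hA.eigenvectorUnitary.2
    have hrw : μ • (1 : Matrix V V ℝ) - A
        = (hA.eigenvectorUnitary : Matrix V V ℝ) *
            Matrix.diagonal (fun v => μ - hA.eigenvalues v) *
            star (hA.eigenvectorUnitary : Matrix V V ℝ) := by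
      have hspec := hA.spectral_theorem
      simp only [Unitary.conjStarAlgAut_apply, Unitary.coe_star] at hspec
      have hdiag : Matrix.diagonal (fun v => μ - hA.eigenvalues v)
          = μ • (1 : Matrix V V ℝ) - Matrix.diagonal (RCLike.ofReal ∘ hA.eigenvalues) := by
        ext i j
        by_cases hij : i = j <;>
          simp [hij, Matrix.diagonal_apply, Matrix.one_apply, Matrix.sub_apply]
      rw [hdiag, Matrix.mul_sub, Matrix.sub_mul, ← hspec]
      congr 1
      rw [Matrix.mul_smul, Matrix.mul_one, Matrix.smul_mul, hU]
    rw [hrw, Matrix.star_eq_conjTranspose]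
    exact Matrix.PosSemidef.mul_mul_conjTranspose_same
      (Matrix.posSemidef_diagonal_iff.mpr
        (fun v => sub_nonneg.2 (le_distEig_one G h v))) _
  have h2 := hpsd.dotProduct_mulVec_nonneg x
  rw [star_trivial, Matrix.sub_mulVec, Matrix.smul_mulVec, Matrix.one_mulVec,
    dotProduct_sub, dotProduct_smul] at h2
  simp only [smul_eq_mul] at h2
  linarith

lemma transmission_lower {G : SimpleGraph V} (hconn : G.Connected) {u v : V} (huv : u ≠ v) :
    G.dist u v + (Fintype.card V - 2) ≤ transmission G u := by
  have h1 : transmission G u = G.dist u v + ∑ w ∈ Finset.univ.erase v, G.dist u w :=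
    (Finset.add_sum_erase _ _ (Finset.mem_univ v)).symm
  have h2 : ∑ _w ∈ (Finset.univ.erase v).erase u, 1 ≤ ∑ w ∈ Finset.univ.erase v, G.dist u w := by
    refine le_trans (Finset.sum_le_sum fun w hw => ?_)
      (Finset.sum_le_sum_of_subset (Finset.erase_subset _ _))
    exact hconn.pos_dist_of_ne (Ne.symm (Finset.mem_erase.1 hw).1)
  have h3 : ((Finset.univ.erase v).erase u).card = Fintype.card V - 1 - 1 := by
    rw [Finset.card_erase_of_mem (Finset.mem_erase.2 ⟨huv, Finset.mem_univ u⟩),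
      Finset.card_erase_of_mem (Finset.mem_univ v), Finset.card_univ]
  rw [Finset.sum_const, smul_eq_mul, mul_one, h3] at h2
  omega

lemma transmission_ge {G : SimpleGraph V} (hconn : G.Connected) (hcard : 2 ≤ Fintype.card V)
    (u : V) : Fintype.card V - 1 ≤ transmission G u := by
  obtain ⟨v, hv⟩ := Fintype.exists_ne_of_one_lt_card (by omega) u
  have h := transmission_lower hconn (Ne.symm hv)
  have hpos := hconn.pos_dist_of_ne (Ne.symm hv)
  omega

lemma sum_transmission_ge {G : SimpleGraph V} (hconn : G.Connected) (u₀ : V) :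
    2 * transmission G u₀ + (Fintype.card V - 1) * (Fintype.card V - 2)
      ≤ ∑ u, transmission G u := by
  have hsplit : ∑ u, transmission G u
      = transmission G u₀ + ∑ u ∈ Finset.univ.erase u₀, transmission G u :=
    (Finset.add_sum_erase _ _ (Finset.mem_univ u₀)).symm
  have hsum2 : ∑ u ∈ Finset.univ.erase u₀, (G.dist u u₀ + (Fintype.card V - 2))
      ≤ ∑ u ∈ Finset.univ.erase u₀, transmission G u :=
    Finset.sum_le_sum fun u hu => transmission_lower hconn (Finset.mem_erase.1 hu).1
  have hd : ∑ u ∈ Finset.univ.erase u₀, G.dist u u₀ = transmission G u₀ := by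
    calc ∑ u ∈ Finset.univ.erase u₀, G.dist u u₀
        = ∑ u ∈ Finset.univ.erase u₀, G.dist u₀ u :=
          Finset.sum_congr rfl fun u _ => SimpleGraph.dist_comm
      _ = ∑ u, G.dist u₀ u := Finset.sum_erase _ (by simp)
      _ = transmission G u₀ := rfl
  rw [Finset.sum_add_distrib, hd, Finset.sum_const, smul_eq_mul,
    Finset.card_erase_of_mem (Finset.mem_univ u₀), Finset.card_univ] at hsum2
  omega

lemma eq_top_of_transmission_le {G : SimpleGraph V} (hconn : G.Connected)
    (hcard : 2 ≤ Fintype.card V) (h : ∀ u, transmission G u ≤ Fintype.card V - 1) :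
    G = ⊤ := by
  ext u v
  rw [SimpleGraph.top_adj]
  constructor
  · exact G.ne_of_adj
  · intro hne
    rw [← SimpleGraph.dist_eq_one_iff_adj]
    by_contra hd1
    have h1 := transmission_lower hconn hne
    have h2 := hconn.pos_dist_of_ne hne
    have h3 := h u
    omega

lemma eq_top_of_card_le_two {G : SimpleGraph V} (hconn : G.Connected)
    (h2 : Fintype.card V ≤ 2) : G = ⊤ := by
  ext u v
  rw [SimpleGraph.top_adj]
  refine ⟨G.ne_of_adj, fun hne => ?_⟩
  obtain ⟨p⟩ := hconn.preconnected u v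
  cases p with
  | nil => exact absurd rfl hne
  | @cons _ x _ hadj q =>
    have hux : u ≠ x := G.ne_of_adj hadj
    have hx : x = v := by
      by_contra hxv
      have h3 : ({u, v, x} : Finset V).card = 3 := by
        rw [Finset.card_insert_of_notMem (by simp [hne, hux]),
          Finset.card_insert_of_notMem
            (by simp only [Finset.mem_singleton]; exact fun h => hxv h.symm),
          Finset.card_singleton]
      have := Finset.card_le_card ({u, v, x} : Finset V).subset_univ
      rw [h3, Finset.card_univ] at this
      omega
    exact hx ▸ hadj

lemma transmission_top (v : V) :
    transmission (⊤ : SimpleGraph V) v = Fintype.card V - 1 := by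
  rw [transmission, ← Finset.sum_erase (a := v) _ (by simp)]
  rw [Finset.sum_congr rfl
      (fun u hu => SimpleGraph.dist_top_of_ne (Ne.symm (Finset.mem_erase.1 hu).1)),
    Finset.sum_const, smul_eq_mul, mul_one, Finset.card_erase_of_mem (Finset.mem_univ v),
    Finset.card_univ]

lemma remoteness_top (h2 : 2 ≤ Fintype.card V) :
    remoteness (⊤ : SimpleGraph V) = 1 := by
  have hne : (Finset.univ : Finset V).Nonempty := Finset.card_pos.mp (by rw [Finset.card_univ]; omega)
  have hsup : Finset.univ.sup (transmission (⊤ : SimpleGraph V)) = Fintype.card V - 1 := by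
    rw [Finset.sup_congr rfl (fun v _ => transmission_top v), Finset.sup_const hne]
  rw [remoteness, hsup]
  rw [Nat.cast_sub (by omega), Nat.cast_one]
  have : ((Fintype.card V : ℝ) - 1) ≠ 0 := by
    have : (2:ℝ) ≤ Fintype.card V := by exact_mod_cast h2
    linarith
  exact div_self this

lemma eig_top_le (h2 : 2 ≤ Fintype.card V) (v : V) :
    (isHermitian_distMatrix (⊤ : SimpleGraph V)).eigenvalues v ≤ (Fintype.card V : ℝ) - 1 := by
  set hA := isHermitian_distMatrix (⊤ : SimpleGraph V) with hAdef
  set μ := hA.eigenvalues v with hμ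
  set w : V → ℝ := ⇑(hA.eigenvectorBasis v) with hw
  have hmv : distMatrix (⊤ : SimpleGraph V) *ᵥ w = μ • w := hA.mulVec_eigenvectorBasis v
  have hwne : w ≠ 0 := by
    intro h0
    exact hA.eigenvectorBasis.orthonormal.ne_zero v (by ext u; exact congrFun h0 u)
  have hNcast : (2:ℝ) ≤ (Fintype.card V : ℝ) := by exact_mod_cast h2
  have hentry : ∀ u, (∑ x, w x) - w u = μ * w u := by
    intro u
    have h := congrFun hmv u
    rw [Matrix.mulVec, dotProduct] at h
    have hlhs : ∑ x, distMatrix (⊤ : SimpleGraph V) u x * w x = (∑ x, w x) - w u := by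
      have : ∀ x, distMatrix (⊤ : SimpleGraph V) u x * w x
          = w x - (if u = x then w x else 0) := by
        intro x
        by_cases hux : u = x <;> simp [distMatrix, SimpleGraph.dist_top, hux]
      rw [Finset.sum_congr rfl (fun x _ => this x), Finset.sum_sub_distrib,
        Finset.sum_ite_eq Finset.univ u w]
      simp
    rw [hlhs] at h
    simpa using h
  set s := ∑ x, w x with hs
  have hsum0 : (Fintype.card V : ℝ) * s - s = μ * s := by
    have h := Finset.sum_congr rfl (fun u (_ : u ∈ (Finset.univ : Finset V)) => hentry u)
    rw [Finset.sum_sub_distrib, Finset.sum_const, Finset.card_univ, ← Finset.mul_sum,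
      nsmul_eq_mul] at h
    exact h
  have hfact : s * ((Fintype.card V : ℝ) - 1 - μ) = 0 := by linear_combination hsum0
  rcases mul_eq_zero.mp hfact with hs0 | hc
  · obtain ⟨u, hu⟩ := Function.ne_iff.mp hwne
    have h := hentry u
    rw [hs0, zero_sub] at h
    simp only [Pi.zero_apply] at hu
    have hμ1 : μ = -1 := by
      have : (μ + 1) * w u = 0 := by linarith
      rcases mul_eq_zero.mp this with h' | h'
      · linarith
      · exact absurd h' hu
    linarith
  · linarith

lemma distEig_top (h2 : 2 ≤ Fintype.card V) :
    distEig (⊤ : SimpleGraph V) 1 = (Fintype.card V : ℝ) - 1 := by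
  have hNcast : (2:ℝ) ≤ (Fintype.card V : ℝ) := by exact_mod_cast h2
  refine le_antisymm ?_ ?_
  · obtain ⟨v, hv⟩ := distEig_one_eq (⊤ : SimpleGraph V) (by omega)
    rw [hv]
    exact eig_top_le h2 v
  · have hray := rayleigh (⊤ : SimpleGraph V) (by omega) (fun _ => (1:ℝ))
    have hdot1 : ((fun _ => (1:ℝ)) : V → ℝ) ⬝ᵥ ((fun _ => (1:ℝ)) : V → ℝ) = (Fintype.card V : ℝ) := by
      simp [dotProduct]
    have hdot2 : (fun _ => (1:ℝ)) ⬝ᵥ (distMatrix (⊤ : SimpleGraph V) *ᵥ fun _ => (1:ℝ))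
        = ((∑ u, transmission (⊤ : SimpleGraph V) u : ℕ) : ℝ) := by
      simp [dotProduct, Matrix.mulVec, distMatrix, transmission]
    have hsum : ((∑ u, transmission (⊤ : SimpleGraph V) u : ℕ) : ℝ)
        = (Fintype.card V : ℝ) * ((Fintype.card V : ℝ) - 1) := by
      rw [Finset.sum_congr rfl (fun u _ => transmission_top u), Finset.sum_const,
        Finset.card_univ, smul_eq_mul]
      push_cast [Nat.cast_sub (by omega : 1 ≤ Fintype.card V)]
      ring
    rw [hdot1, hdot2, hsum] at hray
    have hNpos : (0:ℝ) < (Fintype.card V : ℝ) := by linarith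
    nlinarith

end AUX

/-- For a simple connected graph on `n ≥ 2` vertices with remoteness `ρ`
and distance spectral radius `∂_1`, `∂_1 - ρ ≥ n - 2`, with equality iff `G = K_n`. -/
theorem distSpectralRadius_sub_remoteness_ge (n : ℕ) (hn : 2 ≤ n) (G : SimpleGraph (Fin n))
    (hconn : G.Connected) :
    distEig G 1 - remoteness G ≥ (n : ℝ) - 2 ∧
      (distEig G 1 - remoteness G = (n : ℝ) - 2 ↔ G = ⊤) := by
  have hcard : Fintype.card (Fin n) = n := Fintype.card_fin n
  have hc2 : 2 ≤ Fintype.card (Fin n) := by omega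
  obtain ⟨u₀, -, hu₀⟩ := Finset.exists_mem_eq_sup (Finset.univ : Finset (Fin n))
    (Finset.card_pos.mp (by rw [Finset.card_univ]; omega)) (transmission G)
  set T : ℕ := Finset.univ.sup (transmission G) with hTdef
  have hNge : (2:ℝ) ≤ (n:ℝ) := by exact_mod_cast hn
  have hray := rayleigh G (by omega) (fun _ => (1:ℝ))
  have hdot1 : ((fun _ => (1:ℝ)) : Fin n → ℝ) ⬝ᵥ ((fun _ => (1:ℝ)) : Fin n → ℝ) = (n : ℝ) := by
    simp [dotProduct, hcard]
  have hdot2 : ((fun _ => (1:ℝ)) : Fin n → ℝ) ⬝ᵥ (distMatrix G *ᵥ fun _ => (1:ℝ))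
      = ((∑ u, transmission G u : ℕ) : ℝ) := by
    simp [dotProduct, Matrix.mulVec, distMatrix, transmission]
  rw [hdot1, hdot2] at hray
  have hsumge : 2 * T + (n - 1) * (n - 2) ≤ ∑ u, transmission G u := by
    rw [hu₀]
    have := sum_transmission_ge hconn u₀
    rwa [hcard] at this
  have hTge : n - 1 ≤ T := by
    rw [hu₀]
    have := transmission_ge hconn hc2 u₀
    rwa [hcard] at this
  have hR2 : 2 * (T:ℝ) + ((n:ℝ) - 1) * ((n:ℝ) - 2) ≤ distEig G 1 * n := by
    have h := (Nat.cast_le (α := ℝ)).2 hsumge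
    push_cast [Nat.cast_sub (show 1 ≤ n by omega), Nat.cast_sub (show 2 ≤ n by omega)] at h
    push_cast at hray
    linarith
  have hR3 : (n:ℝ) - 1 ≤ (T:ℝ) := by
    have h := (Nat.cast_le (α := ℝ)).2 hTge
    push_cast [Nat.cast_sub (show 1 ≤ n by omega)] at h
    linarith
  have hN1 : (0:ℝ) < (n:ℝ) - 1 := by linarith
  have hN0 : (0:ℝ) < (n:ℝ) := by linarith
  have hrem : remoteness G = (T:ℝ) / ((n:ℝ) - 1) := by
    rw [remoteness, hcard, hTdef]
  have hrho : remoteness G * ((n:ℝ) - 1) = (T:ℝ) := by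
    rw [hrem]
    field_simp
  have part1 : distEig G 1 - remoteness G ≥ (n : ℝ) - 2 := by
    rw [ge_iff_le, ← sub_nonneg]
    have hkey : 0 ≤ (distEig G 1 - remoteness G - ((n:ℝ) - 2)) * ((n:ℝ) * ((n:ℝ) - 1)) := by
      nlinarith [mul_le_mul_of_nonneg_right hR2 hN1.le,
        mul_nonneg (sub_nonneg.2 hR3) (by linarith : (0:ℝ) ≤ (n:ℝ) - 2), hrho]
    have hpos : (0:ℝ) < (n:ℝ) * ((n:ℝ) - 1) := mul_pos hN0 hN1
    nlinarith [hkey, hpos]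
  refine ⟨part1, ?_, ?_⟩
  · intro heq
    by_cases h3 : 3 ≤ n
    · have hN3 : (3:ℝ) ≤ (n:ℝ) := by exact_mod_cast h3
      have hTle : (T:ℝ) ≤ (n:ℝ) - 1 := by
        have hlameq : distEig G 1 = remoteness G + ((n:ℝ) - 2) := by linarith
        rw [hlameq] at hR2
        nlinarith [mul_le_mul_of_nonneg_right hR2 hN1.le, hrho]
      have hTle' : T ≤ n - 1 := by
        have : (T:ℝ) ≤ ((n - 1 : ℕ) : ℝ) := by
          push_cast [Nat.cast_sub (show 1 ≤ n by omega)]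
          linarith
        exact_mod_cast this
      refine eq_top_of_transmission_le hconn hc2 (fun u => ?_)
      rw [hcard]
      exact le_trans (Finset.le_sup (Finset.mem_univ u)) hTle'
    · exact eq_top_of_card_le_two hconn (by omega)
  · intro hG
    subst hG
    rw [distEig_top hc2, remoteness_top hc2, hcard]
    ring

end DistPaper
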